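/- Comparison of homogeneous in the bi-limit functions: Let φ : ℝⁿ → ℝ and ζ : ℝⁿ → ℝ₊ be continuous functions, homogeneous in the bi-limit with the same weights r₀, r_∞, degrees d_{φ,0}, d_{φ,∞} and d_{ζ,0}, d_{ζ,∞}, and approximating functions φ₀, φ_∞, ζ₀, ζ_∞. If d_{φ,0} ≥ d_{ζ,0}, d_{φ,∞} ≤ d_{ζ,∞}, and ζ, ζ₀, ζ_∞ are positive definite (positive away from 0 and zero at 0), then there exists c > 0 such that φ(x) ≤ c·ζ(x) for all x ∈ ℝⁿ. -/

import Mathlib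

noncomputable def dil {n : ℕ} (r : Fin n → ℝ) (l : ℝ) (x : Fin n → ℝ) : Fin n → ℝ :=
  fun i => l ^ (r i) * x i

/-- `φ` is homogeneous in the 0-limit with associated triple `(r, d, φ₀)`. -/
def Homog0 {n : ℕ} (r : Fin n → ℝ) (d : ℝ) (φ φ₀ : (Fin n → ℝ) → ℝ) : Prop :=
  Continuous φ ∧ Continuous φ₀ ∧ φ₀ ≠ 0 ∧
    ∀ C : Set (Fin n → ℝ), IsCompact C → (0 : Fin n → ℝ) ∉ C →
      ∀ ε > (0:ℝ), ∃ l₀ > (0:ℝ), ∀ x ∈ C, ∀ l : ℝ, 0 < l → l ≤ l₀ →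
        |φ (dil r l x) / l ^ d - φ₀ x| ≤ ε

/-- `φ` is homogeneous in the ∞-limit with associated triple `(r, d, φinf)`. -/
def HomogInf {n : ℕ} (r : Fin n → ℝ) (d : ℝ) (φ φinf : (Fin n → ℝ) → ℝ) : Prop :=
  Continuous φ ∧ Continuous φinf ∧ φinf ≠ 0 ∧
    ∀ C : Set (Fin n → ℝ), IsCompact C → (0 : Fin n → ℝ) ∉ C →
      ∀ ε > (0:ℝ), ∃ linf > (0:ℝ), ∀ x ∈ C, ∀ l : ℝ, l ≥ linf →
        |φ (dil r l x) / l ^ d - φinf x| ≤ ε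

/-!
Measure points by the homogeneous norm `N_r(x) = ∑ |xᵢ|^{1/rᵢ}`, which satisfies
`N_r(dil r l x) = l · N_r(x)`, so every `x ≠ 0` is the dilation by `N_r(x)` of a point of the
compact sphere `N_r = 1`. On that sphere `φ(dil r l ·)/l^{d_φ}` and `ζ(dil r l ·)/l^{d_ζ}` converge
uniformly to `φ₀` and `ζ₀ ≥ min ζ₀ > 0`, which bounds `φ/ζ` by a multiple of `l^{d_φ - d_ζ} ≤ 1` for
small `l`; symmetrically for large `l` with weights `r_∞`. In between, `x` ranges over a compact
set avoiding `0`, where `ζ` has a positive minimum. The point `0` itself follows by continuity.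
-/

open Filter Topology Set

noncomputable def homNorm {n : ℕ} (r : Fin n → ℝ) (x : Fin n → ℝ) : ℝ :=
  ∑ i, |x i| ^ (r i)⁻¹

def homSphere {n : ℕ} (r : Fin n → ℝ) : Set (Fin n → ℝ) :=
  {x | homNorm r x = 1}

section HomNorm

variable {n : ℕ} {r : Fin n → ℝ}

lemma continuous_homNorm (hr : ∀ i, 0 < r i) : Continuous (homNorm r) :=
  continuous_finsetSum _ fun i _ =>
    (continuous_apply i).abs.rpow_const fun _ => Or.inr (inv_nonneg.2 (hr i).le)

lemma homNorm_eq_zero_iff (hr : ∀ i, 0 < r i) {x : Fin n → ℝ} : homNorm r x = 0 ↔ x = 0 := by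
  have hne : ∀ i, (r i)⁻¹ ≠ 0 := fun i => inv_ne_zero (hr i).ne'
  simp only [homNorm,
    Finset.sum_eq_zero_iff_of_nonneg fun i _ => Real.rpow_nonneg (abs_nonneg (x i)) _,
    Finset.mem_univ, true_implies, Real.rpow_eq_zero (abs_nonneg _) (hne _), abs_eq_zero,
    funext_iff, Pi.zero_apply]

lemma homNorm_pos (hr : ∀ i, 0 < r i) {x : Fin n → ℝ} (hx : x ≠ 0) : 0 < homNorm r x :=
  (Finset.sum_nonneg fun i _ => Real.rpow_nonneg (abs_nonneg (x i)) _).lt_of_ne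
    fun h => hx ((homNorm_eq_zero_iff hr).1 h.symm)

lemma homNorm_dil (hr : ∀ i, 0 < r i) {l : ℝ} (hl : 0 < l) (x : Fin n → ℝ) :
    homNorm r (dil r l x) = l * homNorm r x := by
  simp only [homNorm, dil, Finset.mul_sum]
  refine Finset.sum_congr rfl fun i _ => ?_
  have hli : 0 < l ^ r i := Real.rpow_pos_of_pos hl _
  rw [abs_mul, abs_of_pos hli, Real.mul_rpow hli.le (abs_nonneg _), ← Real.rpow_mul hl.le,
    mul_inv_cancel₀ (hr i).ne', Real.rpow_one]

lemma dil_dil_inv {l : ℝ} (hl : 0 < l) (x : Fin n → ℝ) : dil r l (dil r l⁻¹ x) = x := by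
  funext i
  simp only [dil]
  rw [← mul_assoc, ← Real.mul_rpow hl.le (inv_nonneg.2 hl.le), mul_inv_cancel₀ hl.ne',
    Real.one_rpow, one_mul]

lemma isCompact_homNorm_le (hr : ∀ i, 0 < r i) (L : ℝ) : IsCompact {x | homNorm r x ≤ L} := by
  refine (isCompact_univ_pi fun i =>
      isCompact_Icc (a := -L ^ r i) (b := L ^ r i)).of_isClosed_subset
    (isClosed_le (continuous_homNorm hr) continuous_const) fun x hx i _ => abs_le.1 ?_
  have hxi : |x i| ^ (r i)⁻¹ ≤ L :=
    (Finset.single_le_sum (f := fun j => |x j| ^ (r j)⁻¹)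
      (fun j _ => Real.rpow_nonneg (abs_nonneg _) _) (Finset.mem_univ i)).trans hx
  calc |x i| = (|x i| ^ (r i)⁻¹) ^ r i := (Real.rpow_inv_rpow (abs_nonneg _) (hr i).ne').symm
    _ ≤ L ^ r i := Real.rpow_le_rpow (Real.rpow_nonneg (abs_nonneg _) _) hxi (hr i).le

lemma isCompact_homSphere (hr : ∀ i, 0 < r i) : IsCompact (homSphere r) :=
  (isCompact_homNorm_le hr 1).of_isClosed_subset
    (isClosed_eq (continuous_homNorm hr) continuous_const) fun _ hx => hx.le

lemma zero_notMem_homSphere (hr : ∀ i, 0 < r i) : (0 : Fin n → ℝ) ∉ homSphere r := by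
  simp [homSphere, (homNorm_eq_zero_iff hr).2]

lemma dil_inv_homNorm_mem_homSphere (hr : ∀ i, 0 < r i) {x : Fin n → ℝ} (hx : x ≠ 0) :
    dil r (homNorm r x)⁻¹ x ∈ homSphere r := by
  have hpos := homNorm_pos hr hx
  simp only [homSphere, mem_ofPred_eq, homNorm_dil hr (inv_pos.2 hpos), inv_mul_cancel₀ hpos.ne']

end HomNorm

lemma IsCompact.exists_le_mul {E : Type*} [TopologicalSpace E] {K : Set E} (hK : IsCompact K)
    {f g : E → ℝ} (hf : ContinuousOn f K) (hg : ContinuousOn g K) (hgpos : ∀ x ∈ K, 0 < g x) :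
    ∃ c > 0, ∀ x ∈ K, f x ≤ c * g x := by
  obtain ⟨M, hM⟩ := hK.bddAbove_image hf
  obtain ⟨m, hm, hgm⟩ := hK.exists_forall_le' hg hgpos
  refine ⟨(|M| + 1) / m, by positivity, fun x hx => ?_⟩
  calc f x ≤ |M| + 1 := (hM (mem_image_of_mem f hx)).trans ((le_abs_self M).trans (by linarith))
    _ = (|M| + 1) / m * m := by field_simp
    _ ≤ (|M| + 1) / m * g x := by gcongr; exact hgm x hx

lemma IsCompact.exists_eventually_le_mul {ι E : Type*} [TopologicalSpace E] {L : Filter ι}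
    {S : Set E} (hS : IsCompact S) {F G : ι → E → ℝ} {f g : E → ℝ} (hf : ContinuousOn f S)
    (hg : ContinuousOn g S) (hgpos : ∀ y ∈ S, 0 < g y) (hF : TendstoUniformlyOn F f L S)
    (hG : TendstoUniformlyOn G g L S) : ∃ c > 0, ∀ᶠ i in L, ∀ y ∈ S, F i y ≤ c * G i y := by
  obtain ⟨m, hm, hgm⟩ := hS.exists_forall_le' hg hgpos
  obtain ⟨c, hc, hfg⟩ := hS.exists_le_mul (hf.add continuousOn_const) (hg.div_const 2)
    fun y hy => half_pos (hgpos y hy)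
  refine ⟨c, hc, ?_⟩
  filter_upwards [Metric.tendstoUniformlyOn_iff.1 hF 1 one_pos,
    Metric.tendstoUniformlyOn_iff.1 hG (m / 2) (half_pos hm)] with i hFi hGi y hy
  have hFy := (abs_lt.1 (Real.dist_eq _ _ ▸ hFi y hy)).1
  have hGy := (abs_lt.1 (Real.dist_eq _ _ ▸ hGi y hy)).2
  have hmy := hgm y hy
  calc F i y ≤ f y + 1 := by linarith
    _ ≤ c * (g y / 2) := hfg y hy
    _ ≤ c * G i y := by gcongr; linarith

lemma le_mul_of_div_le_mul_div {a b c u v : ℝ} (ha : 0 < a) (hab : a ≤ b) (hcv : 0 ≤ c * v)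
    (h : u / a ≤ c * (v / b)) : u ≤ c * v := by
  have hb : 0 < b := ha.trans_le hab
  rw [div_le_iff₀ ha, mul_div_assoc', div_mul_eq_mul_div, le_div_iff₀ hb] at h
  nlinarith

section Homogeneous

variable {n : ℕ} {r : Fin n → ℝ} {d dφ dζ : ℝ} {φ ζ φlim ζlim : (Fin n → ℝ) → ℝ}

lemma Homog0.tendstoUniformlyOn (h : Homog0 r d φ φlim) {C : Set (Fin n → ℝ)}
    (hC : IsCompact C) (h0 : (0 : Fin n → ℝ) ∉ C) :
    TendstoUniformlyOn (fun l x => φ (dil r l x) / l ^ d) φlim (𝓝[>] 0) C := by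
  refine Metric.tendstoUniformlyOn_iff.2 fun ε hε => ?_
  obtain ⟨l₀, hl₀, H⟩ := h.2.2.2 C hC h0 (ε / 2) (half_pos hε)
  filter_upwards [Ioc_mem_nhdsGT hl₀] with l hl x hx
  rw [dist_comm, Real.dist_eq]
  exact (H x hx l hl.1 hl.2).trans_lt (half_lt_self hε)

lemma HomogInf.tendstoUniformlyOn (h : HomogInf r d φ φlim) {C : Set (Fin n → ℝ)}
    (hC : IsCompact C) (h0 : (0 : Fin n → ℝ) ∉ C) :
    TendstoUniformlyOn (fun l x => φ (dil r l x) / l ^ d) φlim atTop C := by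
  refine Metric.tendstoUniformlyOn_iff.2 fun ε hε => ?_
  obtain ⟨l₀, -, H⟩ := h.2.2.2 C hC h0 (ε / 2) (half_pos hε)
  filter_upwards [eventually_ge_atTop l₀] with l hl x hx
  rw [dist_comm, Real.dist_eq]
  exact (H x hx l hl).trans_lt (half_lt_self hε)

/-- Every `x ≠ 0` is the dilation by `homNorm r x` of a point of the compact sphere, on which the
rescaled functions converge uniformly. -/
lemma exists_eventually_le_mul_of_homNorm_eq {L : Filter ℝ} (hL : ∀ᶠ l in L, 0 < l)
    (hr : ∀ i, 0 < r i)
    (hφ : TendstoUniformlyOn (fun l x => φ (dil r l x) / l ^ dφ) φlim L (homSphere r))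
    (hζ : TendstoUniformlyOn (fun l x => ζ (dil r l x) / l ^ dζ) ζlim L (homSphere r))
    (hφlim : Continuous φlim) (hζlim : Continuous ζlim) (hζlimpos : ∀ x ≠ 0, 0 < ζlim x)
    (hζnn : ∀ x, 0 ≤ ζ x) (hd : ∀ᶠ l in L, l ^ dφ ≤ l ^ dζ) :
    ∃ c > 0, ∀ᶠ l in L, ∀ x ≠ 0, homNorm r x = l → φ x ≤ c * ζ x := by
  obtain ⟨c, hc, hev⟩ := (isCompact_homSphere hr).exists_eventually_le_mul hφlim.continuousOn
    hζlim.continuousOn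
    (fun y hy => hζlimpos y (ne_of_mem_of_not_mem hy (zero_notMem_homSphere hr))) hφ hζ
  refine ⟨c, hc, ?_⟩
  filter_upwards [hev, hL, hd] with l hcmp hl hdl x hx hxl
  have hmem : dil r l⁻¹ x ∈ homSphere r := hxl ▸ dil_inv_homNorm_mem_homSphere hr hx
  have hrescaled : φ x / l ^ dφ ≤ c * (ζ x / l ^ dζ) := dil_dil_inv hl x ▸ hcmp _ hmem
  exact le_mul_of_div_le_mul_div (Real.rpow_pos_of_pos hl _) hdl
    (mul_nonneg hc.le (hζnn x)) hrescaled

lemma Homog0.exists_le_mul_of_homNorm_lt (hr : ∀ i, 0 < r i) (hφ : Homog0 r dφ φ φlim)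
    (hζ : Homog0 r dζ ζ ζlim) (hd : dζ ≤ dφ) (hζnn : ∀ x, 0 ≤ ζ x)
    (hζlimpos : ∀ x ≠ 0, 0 < ζlim x) :
    ∃ c > 0, ∃ δ > 0, ∀ x ≠ 0, homNorm r x < δ → φ x ≤ c * ζ x := by
  have hdl : ∀ᶠ l in 𝓝[>] (0 : ℝ), l ^ dφ ≤ l ^ dζ := by
    filter_upwards [Ioo_mem_nhdsGT one_pos] with l hl
    exact Real.rpow_le_rpow_of_exponent_ge hl.1 hl.2.le hd
  obtain ⟨c, hc, hev⟩ := exists_eventually_le_mul_of_homNorm_eq self_mem_nhdsWithin hr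
    (hφ.tendstoUniformlyOn (isCompact_homSphere hr) (zero_notMem_homSphere hr))
    (hζ.tendstoUniformlyOn (isCompact_homSphere hr) (zero_notMem_homSphere hr))
    hφ.2.1 hζ.2.1 hζlimpos hζnn hdl
  obtain ⟨δ, hδ, hδev⟩ := (nhdsGT_basis 0).eventually_iff.1 hev
  exact ⟨c, hc, δ, hδ, fun x hx hxδ => hδev ⟨homNorm_pos hr hx, hxδ⟩ x hx rfl⟩

lemma HomogInf.exists_le_mul_of_le_homNorm (hr : ∀ i, 0 < r i) (hφ : HomogInf r dφ φ φlim)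
    (hζ : HomogInf r dζ ζ ζlim) (hd : dφ ≤ dζ) (hζnn : ∀ x, 0 ≤ ζ x)
    (hζlimpos : ∀ x ≠ 0, 0 < ζlim x) :
    ∃ c > 0, ∃ Λ, ∀ x ≠ 0, Λ ≤ homNorm r x → φ x ≤ c * ζ x := by
  have hdl : ∀ᶠ l : ℝ in atTop, l ^ dφ ≤ l ^ dζ := by
    filter_upwards [eventually_ge_atTop 1] with l hl
    exact Real.rpow_le_rpow_of_exponent_le hl hd
  obtain ⟨c, hc, hev⟩ := exists_eventually_le_mul_of_homNorm_eq (eventually_gt_atTop 0) hr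
    (hφ.tendstoUniformlyOn (isCompact_homSphere hr) (zero_notMem_homSphere hr))
    (hζ.tendstoUniformlyOn (isCompact_homSphere hr) (zero_notMem_homSphere hr))
    hφ.2.1 hζ.2.1 hζlimpos hζnn hdl
  obtain ⟨Λ, hΛ⟩ := eventually_atTop.1 hev
  exact ⟨c, hc, Λ, fun x hx hxΛ => hΛ _ hxΛ x hx rfl⟩

end Homogeneous

lemma le_at_zero_of_forall_ne_zero {E : Type*} [NormedAddCommGroup E] [NormedSpace ℝ E]
    [Nontrivial E] {f g : E → ℝ} (hf : Continuous f) (hg : Continuous g)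
    (h : ∀ x ≠ 0, f x ≤ g x) : f 0 ≤ g 0 :=
  le_on_closure h hf.continuousOn hg.continuousOn (closure_compl_singleton (0 : E) ▸ mem_univ 0)

theorem comparison_bilimit_general {n : ℕ} (r0 rinf : Fin n → ℝ)
    (hr0 : ∀ i, 0 < r0 i) (hrinf : ∀ i, 0 < rinf i)
    (dφ0 dφinf dζ0 dζinf : ℝ)
    (φ ζ φ0 φinf ζ0 ζinf : (Fin n → ℝ) → ℝ)
    (hφ0 : Homog0 r0 dφ0 φ φ0) (hφinf : HomogInf rinf dφinf φ φinf)
    (hζ0 : Homog0 r0 dζ0 ζ ζ0) (hζinf : HomogInf rinf dζinf ζ ζinf)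
    (hd0 : dφ0 ≥ dζ0) (hdinf : dφinf ≤ dζinf)
    (hζpd : ζ 0 = 0 ∧ ∀ x ≠ 0, 0 < ζ x)
    (hζ0pd : ζ0 0 = 0 ∧ ∀ x ≠ 0, 0 < ζ0 x)
    (hζinfpd : ζinf 0 = 0 ∧ ∀ x ≠ 0, 0 < ζinf x) :
    ∃ c > (0:ℝ), ∀ x : Fin n → ℝ, φ x ≤ c * ζ x := by
  have hζnn : ∀ x, 0 ≤ ζ x := fun x => by
    rcases eq_or_ne x 0 with rfl | hx
    exacts [hζpd.1.ge, (hζpd.2 x hx).le]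
  obtain ⟨c₀, hc₀, δ, hδ, h₀⟩ := hφ0.exists_le_mul_of_homNorm_lt hr0 hζ0 hd0 hζnn hζ0pd.2
  obtain ⟨cinf, -, Λ, hinf⟩ :=
    hφinf.exists_le_mul_of_le_homNorm hrinf hζinf hdinf hζnn hζinfpd.2
  set K := {x | δ ≤ homNorm r0 x ∧ homNorm rinf x ≤ Λ}
  have hK : IsCompact K := (isCompact_homNorm_le hrinf Λ).of_isClosed_subset
    ((isClosed_le continuous_const (continuous_homNorm hr0)).inter
      (isClosed_le (continuous_homNorm hrinf) continuous_const)) fun _ hx => hx.2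
  obtain ⟨cK, -, hmid⟩ := hK.exists_le_mul hφ0.1.continuousOn hζ0.1.continuousOn fun x hx =>
    hζpd.2 x fun h => (hδ.trans_le hx.1).ne' (by simp [h, (homNorm_eq_zero_iff hr0).2])
  set c := max c₀ (max cinf cK)
  have hle : ∀ {c' x}, c' ≤ c → φ x ≤ c' * ζ x → φ x ≤ c * ζ x := fun hc' h =>
    h.trans (mul_le_mul_of_nonneg_right hc' (hζnn _))
  have hne : ∀ x ≠ 0, φ x ≤ c * ζ x := by
    intro x hx
    rcases lt_or_ge (homNorm r0 x) δ with hxδ | hxδ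
    · exact hle (le_max_left _ _) (h₀ x hx hxδ)
    rcases le_or_gt (homNorm rinf x) Λ with hxΛ | hxΛ
    · exact hle ((le_max_right _ _).trans (le_max_right _ _)) (hmid x ⟨hxδ, hxΛ⟩)
    · exact hle ((le_max_left _ _).trans (le_max_right _ _)) (hinf x hx hxΛ.le)
  -- The case `n = 0` is excluded because `ζ0 ≠ 0` but `ζ0 0 = 0`.
  obtain ⟨x₀, hx₀⟩ := Function.ne_iff.1 hζ0.2.2.1
  have : Nontrivial (Fin n → ℝ) := nontrivial_of_ne x₀ 0 fun h => hx₀ (h ▸ hζ0pd.1)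
  refine ⟨c, hc₀.trans_le (le_max_left _ _), fun x => ?_⟩
  rcases eq_or_ne x 0 with rfl | hx
  · exact le_at_zero_of_forall_ne_zero hφ0.1 (continuous_const.mul hζ0.1) hne
  · exact hne x hx

/-- Comparison of homogeneous in the bi-limit functions. -/
theorem comparison_bilimit {n : ℕ} (r0 rinf : Fin n → ℝ)
    (hr0 : ∀ i, 0 < r0 i) (hrinf : ∀ i, 0 < rinf i)
    (dφ0 dφinf dζ0 dζinf : ℝ)
    (φ ζ φ0 φinf ζ0 ζinf : (Fin n → ℝ) → ℝ)
    (hζnn : ∀ x, 0 ≤ ζ x)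
    (hφ0 : Homog0 r0 dφ0 φ φ0) (hφinf : HomogInf rinf dφinf φ φinf)
    (hζ0 : Homog0 r0 dζ0 ζ ζ0) (hζinf : HomogInf rinf dζinf ζ ζinf)
    (hd0 : dφ0 ≥ dζ0) (hdinf : dφinf ≤ dζinf)
    (hζpd : ζ 0 = 0 ∧ ∀ x ≠ 0, 0 < ζ x)
    (hζ0pd : ζ0 0 = 0 ∧ ∀ x ≠ 0, 0 < ζ0 x)
    (hζinfpd : ζinf 0 = 0 ∧ ∀ x ≠ 0, 0 < ζinf x) :
    ∃ c > (0:ℝ), ∀ x : Fin n → ℝ, φ x ≤ c * ζ x :=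
  comparison_bilimit_general r0 rinf hr0 hrinf dφ0 dφinf dζ0 dζinf φ ζ φ0 φinf ζ0 ζinf hφ0 hφinf hζ0
    hζinf hd0 hdinf hζpd hζ0pd hζinfpd
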